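/- arXiv:2001.00822 — 2 statements merged into one kernel-verified Lean document; each statement's English description precedes it below -/
import Mathlib

section
/- Let C_n be the cyclic group of order n, ε : ℤ[C_n] → ℤ the augmentation map, and J a ℤ[C_n]-module such that J ⊕ ℤ[C_n] ≅ I(C_n) ⊕ ℤ[C_n] where I(C_n) = ker(ε) is the augmentation ideal. If ℤ[C_n] has stably free cancellation (every stably free ℤ[C_n]-module is free), then J ≅ I(C_n). -/
/-!
Write `R = ℤ[C_n]`, `I = I(C_n)`, and let `λ : I ⊕ R → R` be the projection `J ⊕ R → R`
transported along the given isomorphism, so that `J ≅ ker λ`. Every homomorphism `α : I → R`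
is multiplication by an element of `R`: `I = (g - 1)R`, and `N · α(g - 1) = α(N(g - 1)) = 0` for
the norm element `N`, which forces `α(g - 1) ∈ I = (g - 1)R`. Hence `λ` extends to a surjection
`R ⊕ R → R`, whose kernel `K` is stably free, so `K ≅ R` by cancellation. Finally
`J ≅ ker λ = K ∩ (I ⊕ R)` is the kernel of a surjection `K → R/I`, and the kernel of any
surjection `R → R/I` is `I`.
-/

/-- The integral group ring `ℤ[C_n]` of the cyclic group of order `n`. -/
abbrev ZC (n : ℕ) : Type := MonoidAlgebra ℤ (Multiplicative (ZMod n))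

/-- The augmentation map `ℤ[C_n] → ℤ`, sending each group element to 1. -/
noncomputable def aug (n : ℕ) : ZC n →ₐ[ℤ] ℤ :=
  MonoidAlgebra.lift ℤ ℤ (Multiplicative (ZMod n)) 1

/-- The augmentation ideal `I(C_n) = ker ε`. -/
noncomputable def augIdeal (n : ℕ) : Ideal (ZC n) :=
  RingHom.ker (aug n).toRingHom

open LinearMap Submodule

universe u

def HasStablyFreeCancellation (R : Type u) [Ring R] : Prop :=
  ∀ (P : Type u) [AddCommGroup P] [Module R P] (a b : ℕ),
    ((P × (Fin a → R)) ≃ₗ[R] (Fin b → R)) → ∃ c : ℕ, Nonempty (P ≃ₗ[R] (Fin c → R))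

section General

variable {R : Type u} [CommRing R]

def LinearMap.kerProdEquivOfApplyEqOne {M : Type*} [AddCommGroup M] [Module R M]
    (f : M →ₗ[R] R) {w : M} (hw : f w = 1) : (ker f × R) ≃ₗ[R] M where
  toFun p := p.1 + p.2 • w
  invFun x := (⟨x - f x • w, by simp [hw]⟩, f x)
  map_add' p q := by simp only [Prod.fst_add, Prod.snd_add, coe_add, add_smul]; abel
  map_smul' r p := by simp [smul_add, smul_smul]
  left_inv p := by ext <;> simp [hw]
  right_inv x := by simp

theorem HasStablyFreeCancellation.nonempty_equiv_self [Nontrivial R]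
    (hR : HasStablyFreeCancellation R) {K : Type u} [AddCommGroup K] [Module R K]
    (e : (K × R) ≃ₗ[R] (R × R)) : Nonempty (K ≃ₗ[R] R) := by
  obtain ⟨c, ⟨ψ⟩⟩ := hR K 1 2 <|
    (LinearEquiv.refl R K).prodCongr (LinearEquiv.funUnique (Fin 1) R R) ≪≫ₗ e ≪≫ₗ
      (LinearEquiv.finTwoArrow R R).symm
  have : Module.Free R K := Module.Free.of_equiv ψ.symm
  have : Module.Finite R K := Module.Finite.equiv ψ.symm
  obtain rfl : c = 1 := by
    have := e.finrank_eq
    simp only [Module.finrank_prod, ψ.finrank_eq, Module.finrank_fin_fun,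
      Module.finrank_self] at this
    omega
  exact ⟨ψ ≪≫ₗ LinearEquiv.funUnique (Fin 1) R R⟩

theorem ker_eq_ideal_of_surjective {I : Ideal R} (f : R →ₗ[R] R ⧸ I)
    (hf : Function.Surjective f) : ker f = I := by
  obtain ⟨d, hd⟩ := hf (Submodule.Quotient.mk 1)
  have hmk (r : R) : Submodule.Quotient.mk r = d • f r := by
    rw [← map_smul, smul_eq_mul, mul_comm, ← smul_eq_mul, map_smul, hd, ← Quotient.mk_smul,
      smul_eq_mul, mul_one]
  refine le_antisymm (fun r hr => ?_) (fun r hr => ?_)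
  · rw [← Quotient.mk_eq_zero I, hmk, mem_ker.mp hr, smul_zero]
  · obtain ⟨c, hc⟩ := Submodule.Quotient.mk_surjective I (f 1)
    rw [mem_ker, ← mul_one r, ← smul_eq_mul, map_smul, ← hc, ← Quotient.mk_smul,
      Quotient.mk_eq_zero, smul_eq_mul]
    exact I.mul_mem_right c hr

theorem exists_comp_prodMap_eq {I : Ideal R}
    (hI : ∀ α : I →ₗ[R] R, ∃ β : R →ₗ[R] R, β ∘ₗ I.subtype = α)
    {M : Type*} [AddCommGroup M] [Module R M] (f : (I × M) →ₗ[R] R) :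
    ∃ g : (R × M) →ₗ[R] R, g ∘ₗ I.subtype.prodMap LinearMap.id = f := by
  obtain ⟨β, hβ⟩ := hI (f ∘ₗ inl R I M)
  refine ⟨β.coprod (f ∘ₗ inr R I M), prod_ext ?_ ?_⟩
  · ext x
    simp [← hβ, Prod.mk_zero_zero]
  · ext x
    simp

theorem nonempty_equiv_ideal_of_ker_equiv (I : Ideal R) {J : Type*} [AddCommGroup J]
    [Module R J] {μ : (J × R) →ₗ[R] R × R} (hμ : Function.Injective μ)
    (hμ_range : range μ = Submodule.prod I ⊤) {g : (R × R) →ₗ[R] R} (hg : ∀ x, g (μ x) = x.2)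
    (ψ : ker g ≃ₗ[R] R) : Nonempty (J ≃ₗ[R] I) := by
  let v : ker g →ₗ[R] R ⧸ I := I.mkQ ∘ₗ fst R R R ∘ₗ (ker g).subtype
  let j : J →ₗ[R] ker g := (μ ∘ₗ inl R J R).codRestrict (ker g) fun m => hg (m, 0)
  have hj : Function.Injective j := fun m m' h =>
    congr_arg Prod.fst (hμ (congr_arg Subtype.val h))
  have hμ_fst (x : J × R) : (μ x).1 ∈ I :=
    (mem_prod.mp (hμ_range ▸ mem_range_self μ x)).1
  have hj_range : range j = ker v := by
    apply le_antisymm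
    · rintro _ ⟨m, rfl⟩
      exact (Submodule.Quotient.mk_eq_zero I).mpr (hμ_fst (m, 0))
    · intro k hk
      obtain ⟨x, hx⟩ : (k : R × R) ∈ range μ := by
        rw [hμ_range]
        exact mem_prod.mpr ⟨by simpa [v, Ideal.Quotient.eq_zero_iff_mem] using hk, trivial⟩
      have hx₂ : x.2 = 0 := by rw [← hg, hx]; exact k.2
      refine ⟨x.1, Subtype.ext ?_⟩
      change μ (x.1, 0) = k
      rw [← hx, ← hx₂]
  have hv : Function.Surjective v := by
    let w : R × R := (1, 0) - μ (0, g (1, 0))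
    have hw : w ∈ ker g := by simp [w, hg]
    have hvw : v ⟨w, hw⟩ = Submodule.Quotient.mk 1 := by
      simpa [v, w, Ideal.Quotient.eq_zero_iff_mem] using hμ_fst (0, g (1, 0))
    intro q
    obtain ⟨r, rfl⟩ := Submodule.Quotient.mk_surjective I q
    exact ⟨r • ⟨w, hw⟩, by rw [map_smul, hvw, ← Quotient.mk_smul, smul_eq_mul, mul_one]⟩
  have hv_ker : (ker v).map (ψ : ker g →ₗ[R] R) = I := by
    rw [map_equiv_eq_comap_symm, ← ker_comp]
    exact ker_eq_ideal_of_surjective _ (hv.comp ψ.symm.surjective)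
  exact ⟨LinearEquiv.ofInjective j hj ≪≫ₗ LinearEquiv.ofEq _ _ hj_range ≪≫ₗ
    ψ.submoduleMap (ker v) ≪≫ₗ LinearEquiv.ofEq _ _ hv_ker⟩

theorem nonempty_equiv_ideal_of_prod_equiv [Nontrivial R] (hR : HasStablyFreeCancellation R)
    {I : Ideal R} (hI : ∀ α : I →ₗ[R] R, ∃ β : R →ₗ[R] R, β ∘ₗ I.subtype = α)
    {J : Type*} [AddCommGroup J] [Module R J] (φ : (J × R) ≃ₗ[R] (I × R)) :
    Nonempty (J ≃ₗ[R] I) := by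
  let μ : (J × R) →ₗ[R] R × R := I.subtype.prodMap LinearMap.id ∘ₗ φ.toLinearMap
  have hμ : Function.Injective μ :=
    (Subtype.val_injective.prodMap Function.injective_id).comp φ.injective
  have hμ_range : range μ = Submodule.prod I ⊤ := by
    rw [range_comp_of_range_eq_top _ φ.range, range_prodMap, range_subtype, range_id]
  obtain ⟨g, hg⟩ := exists_comp_prodMap_eq hI (snd R J R ∘ₗ φ.symm.toLinearMap)
  have hgμ (x : J × R) : g (μ x) = x.2 := by
    simpa [μ] using LinearMap.congr_fun hg (φ x)
  obtain ⟨ψ⟩ := hR.nonempty_equiv_self (g.kerProdEquivOfApplyEqOne (hgμ (0, 1)))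
  exact nonempty_equiv_ideal_of_ker_equiv I hμ hμ_range hgμ ψ

end General

namespace ZC

variable {n : ℕ}

noncomputable def gen (n : ℕ) : ZC n :=
  MonoidAlgebra.of ℤ _ (Multiplicative.ofAdd 1)

noncomputable def normElement (n : ℕ) [NeZero n] : ZC n :=
  ∑ g : Multiplicative (ZMod n), MonoidAlgebra.of ℤ _ g

@[simp]
theorem aug_single (g : Multiplicative (ZMod n)) (r : ℤ) :
    aug n (MonoidAlgebra.single g r) = r := by
  simp [aug, MonoidAlgebra.lift_single]

theorem mem_augIdeal_iff {x : ZC n} : x ∈ augIdeal n ↔ aug n x = 0 :=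
  RingHom.mem_ker

theorem gen_sub_one_dvd_of_sub_one [NeZero n] (g : Multiplicative (ZMod n)) :
    gen n - 1 ∣ MonoidAlgebra.of ℤ _ g - 1 := by
  have hg : MonoidAlgebra.of ℤ _ g = gen n ^ (g.toAdd.val) := by
    rw [gen, ← map_pow, ← ofAdd_nsmul, nsmul_one, ZMod.natCast_zmod_val, ofAdd_toAdd]
  simpa [hg] using sub_dvd_pow_sub_pow (gen n) 1 g.toAdd.val

theorem sub_aug_mem_span [NeZero n] (x : ZC n) :
    x - (aug n x : ZC n) ∈ Ideal.span {gen n - 1} := by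
  induction x using MonoidAlgebra.induction_on with
  | of g =>
    rw [MonoidAlgebra.of_apply, aug_single, Int.cast_one, ← MonoidAlgebra.of_apply,
      Ideal.mem_span_singleton]
    exact gen_sub_one_dvd_of_sub_one g
  | add x y hx hy =>
    rw [map_add, Int.cast_add, add_sub_add_comm]
    exact add_mem hx hy
  | smul r x hx =>
    rw [map_zsmul, smul_eq_mul, Int.cast_mul, ← zsmul_eq_mul, ← smul_sub]
    exact zsmul_mem hx r

theorem augIdeal_eq_span [NeZero n] : augIdeal n = Ideal.span {gen n - 1} := by
  refine le_antisymm (fun x hx => ?_) ?_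
  · simpa [mem_augIdeal_iff.mp hx] using sub_aug_mem_span x
  · rw [Ideal.span_le, Set.singleton_subset_iff, SetLike.mem_coe, mem_augIdeal_iff]
    simp [gen]

theorem normElement_mul [NeZero n] (z : ZC n) : normElement n * z = aug n z • normElement n := by
  induction z using MonoidAlgebra.induction_on with
  | of g =>
    rw [normElement, Finset.sum_mul, MonoidAlgebra.of_apply, aug_single, one_smul]
    exact Fintype.sum_equiv (Equiv.mulRight g) _ _ fun b => by simp
  | add x y hx hy => rw [mul_add, hx, hy, map_add, add_smul]
  | smul r x hx => rw [mul_smul_comm, hx, map_zsmul, smul_eq_mul, mul_smul]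

theorem aug_normElement [NeZero n] : aug n (normElement n) = n := by
  simp [normElement]

theorem normElement_mul_gen_sub_one [NeZero n] : normElement n * (gen n - 1) = 0 := by
  simp [normElement_mul, gen]

theorem mem_augIdeal_of_normElement_mul_eq_zero [NeZero n] {z : ZC n}
    (hz : normElement n * z = 0) : z ∈ augIdeal n := by
  have := congr_arg (aug n) (normElement_mul z)
  rw [hz, map_zero, map_zsmul, aug_normElement, smul_eq_mul, eq_comm, mul_eq_zero] at this
  exact mem_augIdeal_iff.mpr (this.resolve_right (Int.natCast_ne_zero.mpr (NeZero.ne n)))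

theorem exists_comp_subtype_augIdeal_eq [NeZero n] (α : augIdeal n →ₗ[ZC n] ZC n) :
    ∃ β : ZC n →ₗ[ZC n] ZC n, β ∘ₗ (augIdeal n).subtype = α := by
  have hσ : gen n - 1 ∈ augIdeal n := by simp [mem_augIdeal_iff, gen]
  have hα : normElement n * α ⟨_, hσ⟩ = 0 := by
    rw [← smul_eq_mul, ← map_smul]
    convert map_zero α
    exact Subtype.ext normElement_mul_gen_sub_one
  obtain ⟨t, ht⟩ := Ideal.mem_span_singleton.mp
    (augIdeal_eq_span.le (mem_augIdeal_of_normElement_mul_eq_zero hα))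
  refine ⟨LinearMap.toSpanSingleton _ _ t, LinearMap.ext fun x => ?_⟩
  obtain ⟨r, hr⟩ := Ideal.mem_span_singleton'.mp (augIdeal_eq_span.le x.2)
  obtain rfl : r • (⟨_, hσ⟩ : augIdeal n) = x := Subtype.ext hr
  rw [LinearMap.comp_apply, map_smul, map_smul α, ht, toSpanSingleton_apply, smul_assoc]
  rfl

end ZC

/-- If `ℤ[C_n]` has stably free cancellation and `J ⊕ ℤ[C_n] ≅ I(C_n) ⊕ ℤ[C_n]`,
then `J ≅ I(C_n)`. -/
theorem iso_augIdeal_of_stable_iso (n : ℕ) (hn : 0 < n)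
    (J : Type) [AddCommGroup J] [Module (ZC n) J]
    (hSFC : ∀ (P : Type) [AddCommGroup P] [Module (ZC n) P] (a b : ℕ),
      ((P × (Fin a → ZC n)) ≃ₗ[ZC n] (Fin b → ZC n)) →
        ∃ c : ℕ, Nonempty (P ≃ₗ[ZC n] (Fin c → ZC n)))
    (hiso : Nonempty ((J × ZC n) ≃ₗ[ZC n] (↥(augIdeal n) × ZC n))) :
    Nonempty (J ≃ₗ[ZC n] ↥(augIdeal n)) := by
  have : NeZero n := .of_pos hn
  obtain ⟨φ⟩ := hiso
  exact nonempty_equiv_ideal_of_prod_equiv hSFC ZC.exists_comp_subtype_augIdeal_eq φ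
end

section
/- Let n ≥ 2, let C_n = ⟨y⟩ be cyclic of order n, and let J = (y-1)·ℤ[C_n] be the ideal of ℤ[C_n] generated by y−1 (equal to the augmentation ideal). If r is an integer with 1 ≤ r ≤ n−1 and gcd(r,n) = 1, then multiplication by 1 + y + ⋯ + y^{r-1} is an automorphism of J as a ℤ[C_n]-module. -/
/-- The generator `y` of `C_n`, viewed inside `ℤ[C_n]`. -/
noncomputable def gen (n : ℕ) : ZC n :=
  MonoidAlgebra.of ℤ (Multiplicative (ZMod n)) (Multiplicative.ofAdd 1)

/-!
Choose `s` with `r * s ≡ 1 (mod n)`. Then `(y - 1)(1 + y + ⋯ + y^{r-1})(1 + y^r + ⋯ + y^{r(s-1)})`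
telescopes to `y^{rs} - 1 = y - 1`, so multiplication by the second geometric sum inverts
multiplication by the first on the ideal generated by `y - 1`.
-/

open Finset

theorem Ideal.bijOn_mul_span_singleton {R : Type*} [CommSemiring R] {c x y : R}
    (h : c * (x * y) = c) : Set.BijOn (· * x) (span {c} : Set R) (span {c}) := by
  have cancel : ∀ a ∈ span {c}, a * x * y = a := by
    intro a ha
    obtain ⟨b, rfl⟩ := mem_span_singleton'.mp ha
    rw [mul_assoc, mul_assoc, h]
  refine ⟨fun a ha => mul_mem_right x _ ha, fun a ha b hb hab => ?_, fun a ha => ?_⟩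
  · rw [← cancel a ha, ← cancel b hb]
    exact congrArg (· * y) hab
  · exact ⟨a * y, mul_mem_right y _ ha, (mul_right_comm a y x).trans (cancel a ha)⟩

section CommRing

variable {R : Type*} [CommRing R]

theorem sub_one_mul_geom_sum_mul_geom_sum_pow (g : R) (r s : ℕ) :
    (g - 1) * ((∑ k ∈ range r, g ^ k) * ∑ k ∈ range s, (g ^ r) ^ k) = g ^ (r * s) - 1 := by
  rw [← mul_assoc, mul_geom_sum, mul_comm, geom_sum_mul, pow_mul]

theorem bijOn_mul_geom_sum_span_sub_one {g : R} {r s : ℕ} (h : g ^ (r * s) = g) :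
    Set.BijOn (· * ∑ k ∈ range r, g ^ k) (Ideal.span {g - 1} : Set R) (Ideal.span {g - 1}) :=
  Ideal.bijOn_mul_span_singleton (y := ∑ k ∈ range s, (g ^ r) ^ k) <| by
    rw [sub_one_mul_geom_sum_mul_geom_sum_pow, h]

end CommRing

theorem gen_pow (n m : ℕ) :
    gen n ^ m =
      MonoidAlgebra.of ℤ (Multiplicative (ZMod n)) (Multiplicative.ofAdd (m : ZMod n)) := by
  rw [gen, ← map_pow, ← ofAdd_nsmul, nsmul_one]

theorem gen_pow_eq_self {n m : ℕ} (h : (m : ZMod n) = 1) : gen n ^ m = gen n := by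
  rw [gen_pow, h, gen]

theorem mul_geomSum_bijOn_span_general (n : ℕ) (r : ℕ) (hgcd : Nat.gcd r n = 1) :
    Set.BijOn (fun a : ZC n => a * ∑ k ∈ Finset.range r, (gen n) ^ k)
      (↑(Ideal.span {gen n - 1}) : Set (ZC n)) (↑(Ideal.span {gen n - 1})) :=
  bijOn_mul_geom_sum_span_sub_one (s := (r⁻¹ : ZMod n).val) <| gen_pow_eq_self <| by
    push_cast
    exact ZMod.mul_val_inv hgcd

/-- If `gcd(r,n) = 1` with `1 ≤ r ≤ n-1`, then multiplication by `1 + y + ⋯ + y^{r-1}`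
is an automorphism of the ideal `J = (y-1)·ℤ[C_n]`. -/
theorem mul_geomSum_bijOn_span (n : ℕ) (hn : 2 ≤ n) (r : ℕ)
    (hr1 : 1 ≤ r) (hr2 : r ≤ n - 1) (hgcd : Nat.gcd r n = 1) :
    Set.BijOn (fun a : ZC n => a * ∑ k ∈ Finset.range r, (gen n) ^ k)
      (↑(Ideal.span {gen n - 1}) : Set (ZC n)) (↑(Ideal.span {gen n - 1})) :=
  mul_geomSum_bijOn_span_general n r hgcd
end
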